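/- Suppose a_1 = ... = a_ℓ = 0 and a_{ℓ+1} ≠ 0, and let λ = ⌊ℓ/2⌋. Then for k ≤ λ and l > λ, the functions J_k = (x_1⋯x_{2k−1})/(x_2⋯x_{2k}) and F_l = v_{2l} I_l (n even) Poisson-commute: {J_k, F_l} = 0. -/

import Mathlib

open Finset Real

/-- partial derivative of `f` in the `i`-th coordinate direction -/
noncomputable def pd {n : ℕ} (i : Fin n) (f : (Fin n → ℝ) → ℝ) (x : Fin n → ℝ) : ℝ :=
  fderiv ℝ f x (Pi.single i 1)

/-- the quadratic Poisson bracket `{x_i,x_j} = x_i x_j` for `i < j` -/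
noncomputable def pb {n : ℕ} (f g : (Fin n → ℝ) → ℝ) (x : Fin n → ℝ) : ℝ :=
  ∑ i : Fin n, ∑ j : Fin n,
    if i < j then x i * x j * (pd i f x * pd j g x - pd j f x * pd i g x) else 0

/-- `v a j x = a_1 x_1 + ⋯ + a_j x_j` (sum of the first `j` terms, 1-based). -/
noncomputable def v {n : ℕ} (a : Fin n → ℝ) (j : ℕ) (x : Fin n → ℝ) : ℝ :=
  ∑ k : Fin n, if (k : ℕ) < j then a k * x k else 0

/-- right-hand side of the generalized Lotka–Volterra system -/
noncomputable def rhs {n : ℕ} (a : Fin n → ℝ) (x : Fin n → ℝ) (i : Fin n) : ℝ :=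
  x i * ((∑ j : Fin n, if i < j then a j * x j else 0)
        - ∑ j : Fin n, if j < i then a j * x j else 0)

/-- `J k = (x_1 x_3 ⋯ x_{2k-1})/(x_2 x_4 ⋯ x_{2k})` (1-based indexing). -/
noncomputable def J {n : ℕ} (k : ℕ) (x : Fin n → ℝ) : ℝ :=
  ∏ m : Fin n, if (m : ℕ) < 2 * k then
    (if (m : ℕ) % 2 = 0 then x m else (x m)⁻¹) else 1

/-- `I k = (x_{2k+2} x_{2k+4} ⋯ x_n)/(x_{2k+1} x_{2k+3} ⋯ x_{n-1})` (1-based, n even). -/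
noncomputable def Ifun {n : ℕ} (k : ℕ) (x : Fin n → ℝ) : ℝ :=
  ∏ m : Fin n, if 2 * k ≤ (m : ℕ) then
    (if (m : ℕ) % 2 = 1 then x m else (x m)⁻¹) else 1

/-!
The variables of `J_k` are `x_1, …, x_{2k}`, while `F_l` involves only `x_{ℓ+1}, …, x_n`: the
coefficients `a_1, …, a_ℓ` vanish and `I_l` starts at `x_{2l+1}`, with `2k ≤ ℓ < 2l`. As every
variable of `J_k` precedes every variable of `F_l`, the bracket factors as
`{J_k, F_l} = (∑ x_i ∂_i J_k) (∑ x_j ∂_j F_l)`, and the first factor vanishes by Euler's identity,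
`J_k` being a Laurent monomial of total degree `0`.
-/

open Function

section Bracket

variable {n : ℕ}

lemma pd_eq_deriv_update {f : (Fin n → ℝ) → ℝ} {x : Fin n → ℝ} (hf : DifferentiableAt ℝ f x)
    (i : Fin n) : pd i f x = deriv (fun t => f (update x i t)) (x i) :=
  ((hf.hasFDerivAt.comp_hasDerivAt_of_eq (x i) (hasDerivAt_update x i (x i))
    (update_eq_self i x).symm).deriv).symm

lemma pd_eq_zero_of_update_eq {f : (Fin n → ℝ) → ℝ} {i : Fin n}
    (h : ∀ y t, f (update y i t) = f y) (x : Fin n → ℝ) : pd i f x = 0 := by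
  by_cases hf : DifferentiableAt ℝ f x
  · simp [pd_eq_deriv_update hf, h]
  · simp [pd, fderiv_zero_of_not_differentiableAt hf]

lemma pb_eq_mul_of_separated {f g : (Fin n → ℝ) → ℝ} {x : Fin n → ℝ} (p : ℕ)
    (hf : ∀ i : Fin n, p ≤ i → pd i f x = 0) (hg : ∀ j : Fin n, (j : ℕ) < p → pd j g x = 0) :
    pb f g x = (∑ i, x i * pd i f x) * ∑ j, x j * pd j g x := by
  rw [pb, Finset.sum_mul_sum]
  refine Finset.sum_congr rfl fun i _ => Finset.sum_congr rfl fun j _ => ?_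
  rcases lt_or_ge (i : ℕ) p with hi | hi
  · rcases lt_or_ge (j : ℕ) p with hj | hj
    · simp [hg i hi, hg j hj]
    · rw [if_pos (Fin.lt_def.mpr (hi.trans_le hj)), hg i hi]
      ring
  · split_ifs with hij
    · rw [hf i hi, hf j (hi.trans (Fin.lt_def.mp hij).le)]
      ring
    · rw [hf i hi]
      ring

end Bracket

section LaurentMonomial

variable {n : ℕ}

noncomputable def laurentMonomial (e : Fin n → ℤ) (y : Fin n → ℝ) : ℝ :=
  ∏ m, y m ^ e m

lemma laurentMonomial_update (e : Fin n → ℤ) (y : Fin n → ℝ) (i : Fin n) (t : ℝ) :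
    laurentMonomial e (update y i t) = t ^ e i * ∏ m ∈ univ.erase i, y m ^ e m := by
  rw [laurentMonomial, ← Finset.mul_prod_erase univ _ (mem_univ i), update_self]
  congr 1
  exact Finset.prod_congr rfl fun m hm => by rw [update_of_ne (ne_of_mem_erase hm)]

lemma laurentMonomial_update_of_eq_zero {e : Fin n → ℤ} {i : Fin n} (he : e i = 0)
    (y : Fin n → ℝ) (t : ℝ) : laurentMonomial e (update y i t) = laurentMonomial e y := by
  conv_rhs => rw [← update_eq_self i y]
  rw [laurentMonomial_update, laurentMonomial_update, he, zpow_zero, zpow_zero]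

lemma x_mul_pd_laurentMonomial (e : Fin n → ℤ) {x : Fin n → ℝ} (hx : ∀ i, x i ≠ 0)
    (i : Fin n) : x i * pd i (laurentMonomial e) x = e i * laurentMonomial e x := by
  have hdiff : DifferentiableAt ℝ (laurentMonomial e) x := by
    unfold laurentMonomial
    fun_prop (disch := exact Or.inl (hx _))
  conv_rhs => rw [← update_eq_self i x]
  simp only [pd_eq_deriv_update hdiff, laurentMonomial_update]
  rw [deriv_mul_const (differentiableAt_zpow.mpr (Or.inl (hx i))), deriv_zpow]
  calc x i * (e i * x i ^ (e i - 1) * ∏ m ∈ univ.erase i, x m ^ e m)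
      = e i * (x i * x i ^ (e i - 1)) * ∏ m ∈ univ.erase i, x m ^ e m := by ring
    _ = e i * (x i ^ e i * ∏ m ∈ univ.erase i, x m ^ e m) := by
      rw [← zpow_one_add₀ (hx i), add_sub_cancel]; ring

lemma sum_x_mul_pd_laurentMonomial (e : Fin n → ℤ) {x : Fin n → ℝ} (hx : ∀ i, x i ≠ 0) :
    ∑ i, x i * pd i (laurentMonomial e) x = (∑ i, e i) * laurentMonomial e x := by
  simp only [x_mul_pd_laurentMonomial e hx, Int.cast_sum, Finset.sum_mul]

end LaurentMonomial

lemma zpow_neg_one_pow_eq_ite (t : ℝ) (m : ℕ) :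
    t ^ ((-1 : ℤ) ^ m) = if m % 2 = 0 then t else t⁻¹ := by
  split_ifs with h
  · rw [Even.neg_one_pow (Nat.even_iff.mpr h), zpow_one]
  · rw [Odd.neg_one_pow (Nat.odd_iff.mpr (by omega)), zpow_neg_one]

lemma J_eq_laurentMonomial {n : ℕ} (k : ℕ) :
    J (n := n) k = laurentMonomial fun m => if (m : ℕ) < 2 * k then (-1) ^ (m : ℕ) else 0 := by
  ext y
  refine Finset.prod_congr rfl fun m _ => ?_
  split_ifs <;> simp [zpow_neg_one_pow_eq_ite, *]

lemma Ifun_eq_laurentMonomial {n : ℕ} (l : ℕ) :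
    Ifun (n := n) l = laurentMonomial fun m => if 2 * l ≤ (m : ℕ) then -(-1) ^ (m : ℕ) else 0 := by
  ext y
  refine Finset.prod_congr rfl fun m _ => ?_
  split_ifs with h1 h2 <;> simp [zpow_neg, zpow_neg_one_pow_eq_ite, inv_inv, *]

lemma sum_range_two_mul_neg_one_pow (k : ℕ) : ∑ m ∈ range (2 * k), (-1 : ℤ) ^ m = 0 := by
  induction k with
  | zero => simp
  | succ k ih => rw [Nat.mul_succ, sum_range_succ, sum_range_succ, ih, pow_succ]; ring

lemma sum_J_exponents {n k : ℕ} (hk : 2 * k ≤ n) :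
    ∑ m : Fin n, (if (m : ℕ) < 2 * k then (-1 : ℤ) ^ (m : ℕ) else 0) = 0 := by
  rw [Fin.sum_univ_eq_sum_range (fun m => if m < 2 * k then (-1 : ℤ) ^ m else 0),
    ← sum_filter, show (range n).filter (· < 2 * k) = range (2 * k) by ext; simp; omega]
  exact sum_range_two_mul_neg_one_pow k

lemma v_update_eq {n : ℕ} {a : Fin n → ℝ} {c : ℕ} {i : Fin n} (h : (i : ℕ) < c → a i = 0)
    (y : Fin n → ℝ) (t : ℝ) : v a c (update y i t) = v a c y := by
  refine Finset.sum_congr rfl fun m _ => ?_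
  rcases eq_or_ne m i with rfl | hm
  · by_cases hc : (m : ℕ) < c <;> simp [hc, h]
  · rw [update_of_ne hm]

theorem J_F_commute_general (n : ℕ) (a : Fin n → ℝ) (ℓ : ℕ) (hℓ : ℓ < n)
    (hzero : ∀ m : Fin n, (m : ℕ) < ℓ → a m = 0)
    (k l : ℕ) (hk2 : k ≤ ℓ / 2) (hl1 : ℓ / 2 < l)
    (x : Fin n → ℝ) (hx : ∀ i, x i ≠ 0) :
    pb (J k) (fun y => v a (2 * l) y * Ifun l y) x = 0 := by
  have hJ (i : Fin n) (hi : 2 * k ≤ i) : pd i (J k) x = 0 :=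
    pd_eq_zero_of_update_eq (fun y t => by
      rw [J_eq_laurentMonomial, laurentMonomial_update_of_eq_zero (if_neg (by omega))]) x
  have hF (j : Fin n) (hj : (j : ℕ) < 2 * k) :
      pd j (fun y => v a (2 * l) y * Ifun l y) x = 0 :=
    pd_eq_zero_of_update_eq (fun y t => by
      rw [v_update_eq (fun _ => hzero j (by omega)), Ifun_eq_laurentMonomial,
        laurentMonomial_update_of_eq_zero (if_neg (by omega))]) x
  rw [pb_eq_mul_of_separated (2 * k) hJ hF, J_eq_laurentMonomial,
    sum_x_mul_pd_laurentMonomial _ hx, sum_J_exponents (by omega), Int.cast_zero, zero_mul,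
    zero_mul]

/-- with `a_1 = ⋯ = a_ℓ = 0`, `a_{ℓ+1} ≠ 0` and `λ = ⌊ℓ/2⌋`,
one has `{J_k, F_l} = 0` for `k ≤ λ < l` (n even, `F_l = v_{2l} I_l`). -/
theorem J_F_commute (n : ℕ) (hn : Even n) (a : Fin n → ℝ) (ℓ : ℕ) (hℓ : ℓ < n)
    (hzero : ∀ m : Fin n, (m : ℕ) < ℓ → a m = 0)
    (hne : a ⟨ℓ, hℓ⟩ ≠ 0)
    (k l : ℕ) (hk1 : 1 ≤ k) (hk2 : k ≤ ℓ / 2) (hl1 : ℓ / 2 < l) (hl2 : l ≤ n / 2)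
    (x : Fin n → ℝ) (hx : ∀ i, x i ≠ 0) :
    pb (J k) (fun y => v a (2 * l) y * Ifun l y) x = 0 :=
  J_F_commute_general n a ℓ hℓ hzero k l hk2 hl1 x hx
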